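/- Assume: (consistency) for every ω ∈ Ω, α ∈ Bool and m ∈ 𝕄, if A ω = α and M ω = m then Ŷ ω = Ŷ(α, m) ω, and if A ω = α then M ω = M(α) ω; (conditional randomization, in the mean-independence form it implies) for all m ∈ 𝕄 and w ∈ 𝕎: E[Ŷ(a, m) | A = a, M = m, W = w] = E[Ŷ(a, m) | A = a, W = w], E[Ŷ(a, m) | A = a, W = w] = E[Ŷ(a, m) | W = w], and P(M(a') = m | A = a', W = w) = P(M(a') = m | W = w); (cross-world independence) for all m ∈ 𝕄 and w ∈ 𝕎: E[Ŷ(a, m) · 1{M(a') = m} | W = w] = E[Ŷ(a, m) | W = w] · P(M(a') = m | W = w). Then the observed-data identification functional equals the counterfactual mean of the derived outcome: Σ_{w ∈ 𝕎} P(W = w) · Σ_{m ∈ 𝕄} E[Ŷ | A = a, M = m, W = w] · P(M = m | A = a', W = w) = E[ω ↦ Ŷ(a, M(a')(ω))(ω)]. (Exact identification identity underlying Theorem 1.) -/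

import Mathlib

/-! For fixed `m` and `w`, consistency replaces `Ŷ` by `Ŷ(a, m)` on `{A = a, M = m, W = w}` and
`M` by `M(a')` on `{A = a', W = w}`; mean independence then drops the conditioning on `A` and `M`,
and cross-world independence fuses the product into `E[Ŷ(a, m) · 1{M(a') = m} | W = w]`.
Summing over `m` gives `E[Ŷ(a, M(a')) | W = w]`, and the weighted sum over `w` is the law of
total expectation. -/

open MeasureTheory ProbabilityTheory

lemma apply_eq_sum_indicator {Ω ι β : Type*} [AddCommMonoid β] [Fintype ι] (Y : ι → Ω → β)
    (N : Ω → ι) (ω : Ω) : Y (N ω) ω = ∑ i, {ω | N ω = i}.indicator (Y i) ω := by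
  rw [Finset.sum_eq_single_of_mem (N ω) (Finset.mem_univ _) fun i _ hi =>
    Set.indicator_of_notMem (s := {ω | N ω = i}) (Ne.symm hi) (Y i)]
  exact (Set.indicator_of_mem (s := {ω | N ω = N ω}) rfl (Y (N ω))).symm

namespace ProbabilityTheory

variable {Ω ι : Type*} [MeasurableSpace Ω] {μ : Measure Ω} {s : Set Ω}

lemma integral_cond_congr {E : Type*} [NormedAddCommGroup E] [NormedSpace ℝ E] {f g : Ω → E}
    (hs : MeasurableSet s) (h : ∀ ω ∈ s, f ω = g ω) :
    ∫ ω, f ω ∂μ[|s] = ∫ ω, g ω ∂μ[|s] :=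
  integral_congr_ae (ae_cond_of_forall_mem hs h)

lemma cond_congr_set {t t' : Set Ω} (hs : MeasurableSet s) (h : ∀ ω ∈ s, ω ∈ t ↔ ω ∈ t') :
    μ[t | s] = μ[t' | s] :=
  measure_congr (Filter.eventuallyEq_set.2 (ae_cond_of_forall_mem hs h))

lemma integrable_of_bounded [IsFiniteMeasure μ] {f : Ω → ℝ} (hf : Measurable f)
    (hbdd : ∃ C, ∀ ω, |f ω| ≤ C) : Integrable f μ :=
  let ⟨C, hC⟩ := hbdd
  .of_bound hf.aestronglyMeasurable C (.of_forall hC)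

variable [Fintype ι] [MeasurableSpace ι] [MeasurableSingletonClass ι] {N : Ω → ι}

lemma integrable_apply {Y : ι → Ω → ℝ} (hY : ∀ i, Integrable (Y i) μ) (hN : Measurable N) :
    Integrable (fun ω => Y (N ω) ω) μ := by
  simp_rw [apply_eq_sum_indicator Y N]
  exact integrable_finsetSum _ fun i _ => (hY i).indicator (hN (measurableSet_singleton i))

lemma sum_integral_mul_indicator_eq_integral_apply {Y : ι → Ω → ℝ}
    (hY : ∀ i, Integrable (Y i) μ) (hN : Measurable N) :
    ∑ i, ∫ ω, Y i ω * {ω | N ω = i}.indicator (fun _ => (1 : ℝ)) ω ∂μ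
      = ∫ ω, Y (N ω) ω ∂μ := by
  simp_rw [← Set.indicator_mul_right, mul_one, apply_eq_sum_indicator Y N]
  exact (integral_finsetSum _ fun i _ => (hY i).indicator (hN (measurableSet_singleton i))).symm

lemma sum_measure_mul_integral_cond_eq_integral [IsFiniteMeasure μ] {f : Ω → ℝ}
    (hN : Measurable N) (hf : Integrable f μ) :
    ∑ i, (μ {ω | N ω = i}).toReal * ∫ ω, f ω ∂μ[|{ω | N ω = i}] = ∫ ω, f ω ∂μ := by
  have hμ := sum_meas_smul_cond_fiber hN μ
  have hle : ∀ i, μ (N ⁻¹' {i}) • μ[|N ← i] ≤ μ := fun i =>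
    (Finset.single_le_sum (f := fun j => μ (N ⁻¹' {j}) • μ[|N ← j])
      (fun _ _ => Measure.zero_le _) (Finset.mem_univ i)).trans_eq hμ
  conv_rhs => rw [← hμ]
  rw [integral_finsetSum_measure fun i _ => hf.mono_measure (hle i)]
  simp_rw [integral_smul_measure, smul_eq_mul]
  rfl

end ProbabilityTheory

theorem identification_of_counterfactual_mean
    {Ω : Type*} [MeasurableSpace Ω] (P : Measure Ω) [IsProbabilityMeasure P]
    {𝕄 𝕎 : Type*} [Fintype 𝕄] [MeasurableSpace 𝕄] [MeasurableSingletonClass 𝕄]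
    [Fintype 𝕎] [MeasurableSpace 𝕎] [MeasurableSingletonClass 𝕎]
    (A : Ω → Bool) (M : Ω → 𝕄) (W : Ω → 𝕎)
    (hA : Measurable A) (hM : Measurable M) (hW : Measurable W)
    (Ypot : Bool → 𝕄 → Ω → ℝ) (Mpot : Bool → Ω → 𝕄) (Yobs : Ω → ℝ)
    (hYpot_meas : ∀ (α : Bool) (m : 𝕄), Measurable (Ypot α m))
    (hYpot_bdd : ∀ (α : Bool) (m : 𝕄), ∃ C : ℝ, ∀ ω, |Ypot α m ω| ≤ C)
    (hMpot_meas : ∀ α : Bool, Measurable (Mpot α))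
    (a a' : Bool)
    -- consistency
    (consistY : ∀ ω (α : Bool) (m : 𝕄), A ω = α → M ω = m → Yobs ω = Ypot α m ω)
    (consistM : ∀ ω (α : Bool), A ω = α → M ω = Mpot α ω)
    -- conditional randomization, in the mean-independence form it implies
    (mi1 : ∀ (m : 𝕄) (w : 𝕎),
      ∫ ω, Ypot a m ω ∂(P[|{ω | A ω = a ∧ M ω = m ∧ W ω = w}])
        = ∫ ω, Ypot a m ω ∂(P[|{ω | A ω = a ∧ W ω = w}]))
    (mi2 : ∀ (m : 𝕄) (w : 𝕎),
      ∫ ω, Ypot a m ω ∂(P[|{ω | A ω = a ∧ W ω = w}])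
        = ∫ ω, Ypot a m ω ∂(P[|{ω | W ω = w}]))
    (mi3 : ∀ (m : 𝕄) (w : 𝕎),
      (P[|{ω | A ω = a' ∧ W ω = w}]) {ω | Mpot a' ω = m}
        = (P[|{ω | W ω = w}]) {ω | Mpot a' ω = m})
    -- cross-world independence
    (crossWorld : ∀ (m : 𝕄) (w : 𝕎),
      ∫ ω, Ypot a m ω * ({ω | Mpot a' ω = m}.indicator (fun _ => (1 : ℝ)) ω)
          ∂(P[|{ω | W ω = w}])
        = (∫ ω, Ypot a m ω ∂(P[|{ω | W ω = w}]))
            * ((P[|{ω | W ω = w}]) {ω | Mpot a' ω = m}).toReal) :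
    ∑ w : 𝕎, (P {ω | W ω = w}).toReal *
      ∑ m : 𝕄, (∫ ω, Yobs ω ∂(P[|{ω | A ω = a ∧ M ω = m ∧ W ω = w}]))
        * ((P[|{ω | A ω = a' ∧ W ω = w}]) {ω | M ω = m}).toReal
      = ∫ ω, Ypot a (Mpot a' ω) ω ∂P := by
  have hYint : ∀ m (μ : Measure Ω) [IsFiniteMeasure μ], Integrable (Ypot a m) μ :=
    fun m _ _ => integrable_of_bounded (hYpot_meas a m) (hYpot_bdd a m)
  have hterm : ∀ m w,
      (∫ ω, Yobs ω ∂(P[|{ω | A ω = a ∧ M ω = m ∧ W ω = w}]))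
          * ((P[|{ω | A ω = a' ∧ W ω = w}]) {ω | M ω = m}).toReal
        = ∫ ω, Ypot a m ω * ({ω | Mpot a' ω = m}.indicator (fun _ => (1 : ℝ)) ω)
            ∂(P[|{ω | W ω = w}]) := by
    intro m w
    have hAMW : MeasurableSet {ω | A ω = a ∧ M ω = m ∧ W ω = w} :=
      (hA (measurableSet_singleton a)).inter
        ((hM (measurableSet_singleton m)).inter (hW (measurableSet_singleton w)))
    have hAW : MeasurableSet {ω | A ω = a' ∧ W ω = w} :=
      (hA (measurableSet_singleton a')).inter (hW (measurableSet_singleton w))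
    rw [integral_cond_congr hAMW fun ω hω => consistY ω a m hω.1 hω.2.1,
      cond_congr_set hAW (t := {ω | M ω = m}) (t' := {ω | Mpot a' ω = m})
        fun ω hω => Iff.of_eq (congrArg (· = m) (consistM ω a' hω.1)),
      mi1, mi2, mi3, crossWorld]
  simp_rw [hterm,
    sum_integral_mul_indicator_eq_integral_apply (fun m => hYint m _) (hMpot_meas a')]
  exact sum_measure_mul_integral_cond_eq_integral hW
    (integrable_apply (fun m => hYint m P) (hMpot_meas a'))
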